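/- For all n ≥ 10^6, p(n) ≥ 2^{8√n/3}/(2^{5/2}·n^{3/4}). -/

import Mathlib

/-!
Choosing `j` of the `n - 1` gaps between `1, …, n` as cut points gives `C(n - 1, j)` compositions
of `n` into `j + 1` parts, and each partition of `n` into `j + 1` parts arises from at most
`(j + 1)!` of them, so `C(n - 1, j) ≤ (j + 1)! p(n)`. With `j + 1 = ⌊√n⌋`, the bound
`C(n - 1, j) ≥ (n - j)^j / j!` and Stirling's upper bound for the factorials give
`log p(n) ≥ 2√n - 3 log √n - 6`. The logarithm of the claimed bound is
`(8/3) log 2 · √n - (5/2) log 2 - (3/2) log √n`, which is smaller once `√n ≥ 1000` because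
`(8/3) log 2 < 2`.
-/

open Finset Real
open scoped Nat

def p (n : ℕ) : ℕ := Fintype.card (Nat.Partition n)

theorem length_compositionAsSetEquiv_symm {n : ℕ} (hn : 0 < n) (s : Finset (Fin (n - 1))) :
    ((compositionAsSetEquiv n).symm s).length = #s + 1 := by
  set shift : Fin (n - 1) ↪ Fin (n + 1) := (Fin.castLEEmb (by omega)).trans (Fin.succEmb n)
  have hshift (j : Fin (n - 1)) : (shift j : ℕ) = j + 1 := rfl
  have hb : ((compositionAsSetEquiv n).symm s).boundaries =
      insert 0 (insert (Fin.last n) (s.map shift)) := by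
    ext i
    simp only [compositionAsSetEquiv, Equiv.coe_fn_symm_mk, Set.mem_toFinset, Set.mem_ofPred_eq,
      mem_insert, mem_map, Fin.ext_iff, hshift, exists_prop, eq_comm (b := (i : ℕ))]
  have h0 : (0 : Fin (n + 1)) ∉ insert (Fin.last n) (s.map shift) := by
    simp only [mem_insert, mem_map, not_or, not_exists, not_and, Fin.ext_iff, hshift,
      Fin.val_zero, Fin.val_last]
    exact ⟨by omega, by omega⟩
  have hlast : Fin.last n ∉ s.map shift := by
    simp only [mem_map, not_exists, not_and, Fin.ext_iff, hshift, Fin.val_last]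
    omega
  rw [CompositionAsSet.length, hb, card_insert_of_notMem h0, card_insert_of_notMem hlast, card_map]
  rfl

theorem card_composition_length_eq {n : ℕ} (hn : 0 < n) (k : ℕ) :
    #{c : Composition n | c.length = k + 1} = (n - 1).choose k := by
  let e := (compositionEquiv n).trans (compositionAsSetEquiv n)
  have hlen (c : Composition n) : c.length = #(e c) + 1 := by
    rw [← length_compositionAsSetEquiv_symm hn, Equiv.trans_apply, Equiv.symm_apply_apply]
    exact (Composition.toCompositionAsSet_length c).symm
  rw [card_equiv e (t := powersetCard k univ) fun c => by simp [hlen],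
    card_powersetCard, Finset.card_univ, Fintype.card_fin]

theorem card_filter_ofComposition_eq_le {n : ℕ} (P : n.Partition) :
    #{c : Composition n | Nat.Partition.ofComposition n c = P} ≤ (Multiset.card P.parts)! := by
  calc _ ≤ #P.parts.toList.permutations.toFinset := by
        refine card_le_card_of_injOn Composition.blocks (fun c hc => ?_)
          (fun c _ c' _ h => Composition.ext h)
        simp only [coe_filter, mem_univ, true_and, Set.mem_ofPred_eq] at hc
        simp only [List.coe_toFinset, Set.mem_ofPred_eq, List.mem_permutations]
        rw [← Multiset.coe_eq_coe, Multiset.coe_toList, ← hc]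
        rfl
    _ ≤ P.parts.toList.permutations.length := List.toFinset_card_le _
    _ = _ := by rw [List.length_permutations, Multiset.length_toList]

theorem choose_le_factorial_mul_p {n : ℕ} (hn : 0 < n) (k : ℕ) :
    (n - 1).choose k ≤ (k + 1)! * p n := by
  rw [← card_composition_length_eq hn]
  set s : Finset (Composition n) := {c | c.length = k + 1}
  calc #s ≤ (k + 1)! * #(s.image (Nat.Partition.ofComposition n)) := by
        refine card_le_mul_card_image s _ fun P hP => ?_
        obtain ⟨c, hc, rfl⟩ := mem_image.1 hP
        have hcard : Multiset.card (Nat.Partition.ofComposition n c).parts = k + 1 := by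
          simpa [s] using hc
        calc _ ≤ #{c' : Composition n | Nat.Partition.ofComposition n c' =
                Nat.Partition.ofComposition n c} :=
              card_le_card (filter_subset_filter _ (subset_univ _))
          _ ≤ (k + 1)! := hcard ▸ card_filter_ofComposition_eq_le _
    _ ≤ (k + 1)! * p n := Nat.mul_le_mul_left _ (card_le_univ _)

theorem pow_div_factorial_mul_le_p {n : ℕ} (hn : 0 < n) (k : ℕ) :
    ((n - k : ℕ) : ℝ) ^ k / (k ! * (k + 1)!) ≤ p n := by
  have hchoose := Nat.pow_le_choose (α := ℝ) k (n - 1)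
  rw [Nat.sub_add_cancel hn] at hchoose
  have hcount : ((n - 1).choose k : ℝ) ≤ (k + 1)! * p n := by
    exact_mod_cast choose_le_factorial_mul_p hn k
  rw [← div_div, div_le_iff₀ (by positivity), mul_comm]
  exact hchoose.trans hcount

theorem log_factorial_le {k : ℕ} (hk : k ≠ 0) : log k ! ≤ k * log k - k + log k / 2 + 1 := by
  obtain ⟨j, rfl⟩ := Nat.exists_eq_succ_of_ne_zero hk
  have h := Stirling.log_stirlingSeq'_antitone (Nat.zero_le j)
  simp only [Function.comp_apply, Stirling.stirlingSeq_one,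
    Stirling.log_stirlingSeq_formula] at h
  have hpos : (0 : ℝ) < (j.succ : ℝ) := by positivity
  rw [log_div (exp_pos 1).ne' (by positivity), log_exp, log_mul two_ne_zero hpos.ne',
    log_div hpos.ne' (exp_pos 1).ne', log_exp, log_sqrt zero_le_two] at h
  linarith

theorem log_two_rpow_div_le {x : ℝ} (hx : 10 ^ 6 ≤ x) :
    log (2 ^ (8 * √x / 3) / (2 ^ ((5 : ℝ) / 2) * x ^ ((3 : ℝ) / 4))) ≤ 2 * √x - 6 - 3 * log √x := by
  have hx0 : 0 < x := by linarith
  have hS : 1000 ≤ √x := Real.le_sqrt_of_sq_le (by linarith)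
  have hlogS : log √x ≤ √x / 100 + 4 := by
    have h1 := log_le_sub_one_of_pos (show 0 < √x / 100 by positivity)
    have h2 : log 100 ≤ 7 * log 2 := by
      calc log 100 ≤ log (2 ^ 7) := log_le_log (by norm_num) (by norm_num)
        _ = 7 * log 2 := by rw [Real.log_pow]; norm_num
    rw [log_div (by positivity) (by norm_num)] at h1
    linarith [log_two_lt_d9]
  have hlogx : log x = 2 * log √x := by rw [log_sqrt hx0.le]; ring
  rw [log_div (by positivity) (by positivity), log_mul (by positivity) (by positivity),
    log_rpow two_pos, log_rpow two_pos, log_rpow hx0, hlogx]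
  linarith [mul_le_mul_of_nonneg_left log_two_lt_d9.le (sqrt_nonneg x), log_two_gt_d9]

theorem le_log_pow_div_factorial_mul (n j : ℕ) (hj : 1 ≤ j) (hjS : (j + 1 : ℝ) ≤ √n)
    (hSj : √n < j + 2) :
    2 * √n - 6 - 3 * log √n ≤ log (((n - j : ℕ) : ℝ) ^ j / (j ! * (j + 1)!)) := by
  set S := √n
  have hj1 : (1 : ℝ) ≤ j := by exact_mod_cast hj
  have hS1 : 0 < S - 1 := by linarith
  have hS0 : 0 < S := by linarith
  have hSS : S ^ 2 = n := sq_sqrt n.cast_nonneg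
  have hjn : j ≤ n := by
    have : (j : ℝ) ≤ n := by nlinarith
    exact_mod_cast this
  have hbase : (S - 1) ^ 2 ≤ ((n - j : ℕ) : ℝ) := by
    rw [Nat.cast_sub hjn, ← hSS]; nlinarith
  have hlog_pred : log S - 1 / (S - 1) ≤ log (S - 1) := by
    have h := one_sub_inv_le_log_of_pos (div_pos hS1 hS0)
    rw [log_div hS1.ne' hS0.ne', inv_div] at h
    have : 1 - S / (S - 1) = -(1 / (S - 1)) := by field_simp; ring
    linarith
  have hj_div : (j : ℝ) * (1 / (S - 1)) ≤ 1 := by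
    rw [mul_one_div, div_le_one hS1]; linarith
  have hlog_base : 2 * j * (log S - 1 / (S - 1)) ≤ j * log ((n - j : ℕ) : ℝ) := by
    have h := log_le_log (by positivity) hbase
    rw [Real.log_pow] at h
    push_cast at h
    nlinarith
  have hlogK : log (j + 1 : ℝ) ≤ log S := log_le_log (by positivity) hjS
  have hfac : log (j + 1)! ≤ (j + 1) * log S - (j + 1) + log S / 2 + 1 := by
    have h := log_factorial_le j.succ_ne_zero
    push_cast at h
    nlinarith
  have hfac_mono : log j ! ≤ log (j + 1)! :=
    log_le_log (by positivity) (by exact_mod_cast Nat.factorial_le j.le_succ)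
  have hpos : (0 : ℝ) < ((n - j : ℕ) : ℝ) := lt_of_lt_of_le (by positivity) hbase
  rw [log_div (pow_pos hpos j).ne' (by positivity), log_mul (by positivity) (by positivity),
    Real.log_pow]
  linarith

/-- For all `n ≥ 10⁶`, `p(n) ≥ 2^{8√n/3}/(2^{5/2}·n^{3/4})`. -/
theorem p_lower_bound_large (n : ℕ) (hn : 10 ^ 6 ≤ n) :
    (2 : ℝ) ^ (8 * Real.sqrt n / 3) / (2 ^ ((5 : ℝ) / 2) * (n : ℝ) ^ ((3 : ℝ) / 4)) ≤
      (p n : ℝ) := by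
  have hsqrt : 1000 ≤ Nat.sqrt n := Nat.le_sqrt.2 (by omega)
  obtain ⟨j, hj⟩ : ∃ j, Nat.sqrt n = j + 1 := ⟨Nat.sqrt n - 1, by omega⟩
  have hjS : (j + 1 : ℝ) ≤ √n := by exact_mod_cast hj ▸ Real.nat_sqrt_le_real_sqrt
  have hSj : √n < j + 2 := by
    have := hj ▸ Real.real_sqrt_lt_nat_sqrt_succ (a := n)
    push_cast at this; linarith
  have hnj : (0 : ℝ) < ((n - j : ℕ) : ℝ) := by
    have := Nat.sqrt_le_self n
    exact_mod_cast (by omega : 0 < n - j)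
  calc _ ≤ ((n - j : ℕ) : ℝ) ^ j / (j ! * (j + 1)!) := by
        rw [← log_le_log_iff (by positivity) (div_pos (pow_pos hnj j) (by positivity))]
        exact (log_two_rpow_div_le (by exact_mod_cast hn)).trans
          (le_log_pow_div_factorial_mul n j (by omega) hjS hSj)
    _ ≤ p n := pow_div_factorial_mul_le_p (by omega) j
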